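/- arXiv:2302.13867 — 4 statements merged into one kernel-verified Lean document; each statement's English description precedes it below -/
import Mathlib

section
/- The set W(R) of linear recurrent sequences over a commutative ring R is closed under the Hurwitz product: if a recurs linearly with some characteristic polynomial and b recurs linearly with some characteristic polynomial, then a ⋆ b recurs linearly with some characteristic polynomial. -/
open Finset

def hurwitz {R : Type*} [CommRing R] (a b : ℕ → R) : ℕ → R :=
  fun n => ∑ i ∈ Finset.range (n + 1), (n.choose i : R) * a i * b (n - i)

/-- `a` is a linear recurrent sequence: there are `N ≥ 1` and coefficients
`h_0, …, h_{N-1}` with `a n = Σ_{i<N} h_i a_{n-1-i}` for all `n ≥ N`. -/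
def IsLinRec {R : Type*} [CommRing R] (a : ℕ → R) : Prop :=
  ∃ N : ℕ, 1 ≤ N ∧ ∃ h : ℕ → R, ∀ n, N ≤ n →
    a n = ∑ i ∈ Finset.range N, h i * a (n - 1 - i)

section Aux

variable {R : Type*} [CommRing R]

/-- The shift operator as a linear map. -/
def shiftL : (ℕ → R) →ₗ[R] (ℕ → R) where
  toFun f := fun n => f (n + 1)
  map_add' _ _ := rfl
  map_smul' _ _ := rfl

@[simp] lemma shiftL_apply (f : ℕ → R) (n : ℕ) : shiftL f n = f (n + 1) := rfl

lemma shiftL_pow_apply (f : ℕ → R) (k n : ℕ) : ((shiftL ^ k) f) n = f (n + k) := by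
  induction k generalizing f with
  | zero => simp
  | succ k ih =>
    rw [pow_succ, Module.End.mul_apply, ih, shiftL_apply]
    congr 1

lemma shiftL_pow_succ (f : ℕ → R) (k : ℕ) :
    (shiftL ^ (k + 1)) f = shiftL ((shiftL ^ k) f) := by
  rw [pow_succ']; rfl

lemma hurwitz_add_left (x y z : ℕ → R) :
    hurwitz (x + y) z = hurwitz x z + hurwitz y z := by
  funext n
  simp only [hurwitz, Pi.add_apply]
  rw [← Finset.sum_add_distrib]
  exact Finset.sum_congr rfl fun i _ => by ring

lemma hurwitz_add_right (x y z : ℕ → R) :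
    hurwitz x (y + z) = hurwitz x y + hurwitz x z := by
  funext n
  simp only [hurwitz, Pi.add_apply]
  rw [← Finset.sum_add_distrib]
  exact Finset.sum_congr rfl fun i _ => by ring

lemma hurwitz_smul_left (r : R) (x z : ℕ → R) :
    hurwitz (r • x) z = r • hurwitz x z := by
  funext n
  simp only [hurwitz, Pi.smul_apply, smul_eq_mul, Finset.mul_sum]
  exact Finset.sum_congr rfl fun i _ => by ring

lemma hurwitz_smul_right (r : R) (x z : ℕ → R) :
    hurwitz x (r • z) = r • hurwitz x z := by
  funext n
  simp only [hurwitz, Pi.smul_apply, smul_eq_mul, Finset.mul_sum]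
  exact Finset.sum_congr rfl fun i _ => by ring

lemma hurwitz_zero_left (z : ℕ → R) : hurwitz (0 : ℕ → R) z = 0 := by
  funext n; simp [hurwitz]

lemma hurwitz_zero_right (z : ℕ → R) : hurwitz z (0 : ℕ → R) = 0 := by
  funext n; simp [hurwitz]

/-- Leibniz rule for the shift of a Hurwitz product. -/
lemma shiftL_hurwitz (a b : ℕ → R) :
    shiftL (hurwitz a b) = hurwitz (shiftL a) b + hurwitz a (shiftL b) := by
  funext n
  have key : ∑ i ∈ Finset.range (n + 2), ((n + 1).choose i : R) * a i * b (n + 1 - i)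
      = (∑ i ∈ Finset.range (n + 1), (n.choose i : R) * a (i + 1) * b (n - i))
        + ∑ i ∈ Finset.range (n + 1), (n.choose i : R) * a i * b (n + 1 - i) := by
    rw [Finset.sum_range_succ' (fun i => ((n + 1).choose i : R) * a i * b (n + 1 - i))]
    have h1 : ∀ i ∈ Finset.range (n + 1),
        ((n + 1).choose (i + 1) : R) * a (i + 1) * b (n + 1 - (i + 1))
          = (n.choose i : R) * a (i + 1) * b (n - i)
            + (n.choose (i + 1) : R) * a (i + 1) * b (n - i) := by
      intro i _
      have : n + 1 - (i + 1) = n - i := by omega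
      rw [this, Nat.choose_succ_succ]
      push_cast
      ring
    rw [Finset.sum_congr rfl h1, Finset.sum_add_distrib]
    have h2 : (∑ i ∈ Finset.range (n + 1),
        (n.choose (i + 1) : R) * a (i + 1) * b (n - i))
          + ((n + 1).choose 0 : R) * a 0 * b (n + 1 - 0)
        = ∑ i ∈ Finset.range (n + 1), (n.choose i : R) * a i * b (n + 1 - i) := by
      have h3 : ∑ i ∈ Finset.range (n + 2), (n.choose i : R) * a i * b (n + 1 - i)
          = (∑ i ∈ Finset.range (n + 1),
              (n.choose (i + 1) : R) * a (i + 1) * b (n + 1 - (i + 1)))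
            + (n.choose 0 : R) * a 0 * b (n + 1 - 0) :=
        Finset.sum_range_succ' (fun i => (n.choose i : R) * a i * b (n + 1 - i)) (n + 1)
      have h4 : ∑ i ∈ Finset.range (n + 2), (n.choose i : R) * a i * b (n + 1 - i)
          = (∑ i ∈ Finset.range (n + 1), (n.choose i : R) * a i * b (n + 1 - i))
            + (n.choose (n + 1) : R) * a (n + 1) * b (n + 1 - (n + 1)) :=
        Finset.sum_range_succ _ (n + 1)
      rw [Nat.choose_succ_self] at h4
      simp only [Nat.cast_zero, zero_mul, add_zero] at h4
      have h5 : ∀ i ∈ Finset.range (n + 1),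
          (n.choose (i + 1) : R) * a (i + 1) * b (n + 1 - (i + 1))
            = (n.choose (i + 1) : R) * a (i + 1) * b (n - i) := by
        intro i _
        congr 2
        omega
      rw [Finset.sum_congr rfl h5] at h3
      simp only [Nat.choose_zero_right, Nat.cast_one] at h3 ⊢
      linear_combination h4 - h3
    rw [add_assoc, h2]
  show hurwitz a b (n + 1) = _
  simp only [hurwitz, Pi.add_apply, shiftL_apply]
  have e2 : ∑ i ∈ Finset.range (n + 1), (n.choose i : R) * a i * b (n + 1 - i)
      = ∑ i ∈ Finset.range (n + 1), (n.choose i : R) * a i * b (n - i + 1) := by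
    refine Finset.sum_congr rfl fun i hi => ?_
    have := Finset.mem_range.mp hi
    congr 2
    omega
  rw [key, e2]

end Aux

section Main

variable {R : Type*} [CommRing R]

lemma isLinRec_of_shift (c : ℕ → R) (D : ℕ) (hD : 1 ≤ D) (g : ℕ → R)
    (h : (shiftL ^ D) c = ∑ j ∈ Finset.range D, g j • (shiftL ^ j) c) : IsLinRec c := by
  refine ⟨D, hD, fun i => g (D - 1 - i), fun n hn => ?_⟩
  have h1 : c n = ∑ j ∈ Finset.range D, g j * c (n - D + j) := by
    have h2 := congrFun h (n - D)
    rw [shiftL_pow_apply] at h2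
    have hn' : n - D + D = n := by omega
    rw [hn'] at h2
    rw [h2, Finset.sum_apply]
    refine Finset.sum_congr rfl fun j hj => ?_
    rw [Pi.smul_apply, shiftL_pow_apply, smul_eq_mul]
  rw [h1, ← Finset.sum_range_reflect (fun j => g j * c (n - D + j)) D]
  refine Finset.sum_congr rfl fun i hi => ?_
  have hi' := Finset.mem_range.mp hi
  have he : n - D + (D - 1 - i) = n - 1 - i := by omega
  simp only [he]

lemma shift_pow_rel (a : ℕ → R) (N : ℕ) (hN : 1 ≤ N) (h : ℕ → R)
    (H : ∀ n, N ≤ n → a n = ∑ i ∈ Finset.range N, h i * a (n - 1 - i)) :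
    (shiftL ^ N) a = ∑ i ∈ Finset.range N, h i • (shiftL ^ (N - 1 - i)) a := by
  funext n
  rw [shiftL_pow_apply, Finset.sum_apply, H (n + N) (by omega)]
  refine Finset.sum_congr rfl fun i hi => ?_
  have hi' := Finset.mem_range.mp hi
  rw [Pi.smul_apply, shiftL_pow_apply, smul_eq_mul]
  have he : n + N - 1 - i = n + (N - 1 - i) := by omega
  rw [he]

lemma restrict_pow_coe {C : Submodule R (ℕ → R)} (hC : ∀ x ∈ C, shiftL x ∈ C)
    (n : ℕ) (x : C) :
    (((shiftL.restrict hC) ^ n) x : ℕ → R) = (shiftL ^ n) (x : ℕ → R) := by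
  induction n generalizing x with
  | zero => simp
  | succ n ih =>
    rw [pow_succ, pow_succ, Module.End.mul_apply, Module.End.mul_apply, ih (shiftL.restrict hC x)]
    congr 1

lemma aeval_restrict_coe {C : Submodule R (ℕ → R)} (hC : ∀ x ∈ C, shiftL x ∈ C)
    (r : Polynomial R) (x : C) :
    ((Polynomial.aeval (shiftL.restrict hC) r) x : ℕ → R)
      = (Polynomial.aeval (shiftL : Module.End R (ℕ → R)) r) (x : ℕ → R) := by
  induction r using Polynomial.induction_on' with
  | add p q hp hq =>
    rw [map_add, map_add, LinearMap.add_apply, LinearMap.add_apply, Submodule.coe_add, hp, hq]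
  | monomial n r =>
    rw [Polynomial.aeval_monomial, Polynomial.aeval_monomial,
      Module.End.mul_apply, Module.End.mul_apply,
      Module.algebraMap_end_apply, Module.algebraMap_end_apply,
      Submodule.coe_smul, restrict_pow_coe]

end Main

theorem hurwitz_closed {R : Type*} [CommRing R] (a b : ℕ → R)
    (ha : IsLinRec a) (hb : IsLinRec b) : IsLinRec (hurwitz a b) := by
  cases subsingleton_or_nontrivial R with
  | inl hsub => exact ⟨1, le_refl 1, 0, fun n _ => Subsingleton.elim _ _⟩
  | inr hnt =>
  obtain ⟨N, hN, h, Ha⟩ := ha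
  obtain ⟨M, hM, g, Hb⟩ := hb
  set SA : Set (ℕ → R) := (fun j => (shiftL ^ j) a) '' Set.Iio N with hSA
  set SB : Set (ℕ → R) := (fun j => (shiftL ^ j) b) '' Set.Iio M with hSB
  set A : Submodule R (ℕ → R) := Submodule.span R SA with hA
  set B : Submodule R (ℕ → R) := Submodule.span R SB with hB
  have hrelA := shift_pow_rel a N hN h Ha
  have hrelB := shift_pow_rel b M hM g Hb
  have hgenA : ∀ j < N, (shiftL ^ j) a ∈ A := fun j hj => Submodule.subset_span ⟨j, hj, rfl⟩
  have hgenB : ∀ j < M, (shiftL ^ j) b ∈ B := fun j hj => Submodule.subset_span ⟨j, hj, rfl⟩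
  have hpowA : ∀ k ≤ N, (shiftL ^ k) a ∈ A := by
    intro k hk
    rcases eq_or_lt_of_le hk with rfl | hk'
    · rw [hrelA]
      exact Submodule.sum_mem _ fun i hi => Submodule.smul_mem _ _
        (hgenA _ (by have := Finset.mem_range.mp hi; omega))
    · exact hgenA k hk'
  have hpowB : ∀ k ≤ M, (shiftL ^ k) b ∈ B := by
    intro k hk
    rcases eq_or_lt_of_le hk with rfl | hk'
    · rw [hrelB]
      exact Submodule.sum_mem _ fun i hi => Submodule.smul_mem _ _
        (hgenB _ (by have := Finset.mem_range.mp hi; omega))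
    · exact hgenB k hk'
  have hAstab : ∀ x ∈ A, shiftL x ∈ A := by
    intro x hx
    have hle : A ≤ Submodule.comap shiftL A := by
      rw [hA, Submodule.span_le]
      rintro _ ⟨j, hj, rfl⟩
      have : shiftL ((shiftL ^ j) a) ∈ A := by
        rw [← shiftL_pow_succ]
        exact hpowA (j + 1) (by exact hj)
      exact this
    exact hle hx
  have hBstab : ∀ x ∈ B, shiftL x ∈ B := by
    intro x hx
    have hle : B ≤ Submodule.comap shiftL B := by
      rw [hB, Submodule.span_le]
      rintro _ ⟨j, hj, rfl⟩
      have : shiftL ((shiftL ^ j) b) ∈ B := by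
        rw [← shiftL_pow_succ]
        exact hpowB (j + 1) (by exact hj)
      exact this
    exact hle hx
  set SC : Set (ℕ → R) := Set.image2 hurwitz SA SB with hSC
  set C : Submodule R (ℕ → R) := Submodule.span R SC with hC
  have hfin : SC.Finite :=
    Set.Finite.image2 _ ((Set.finite_Iio N).image _) ((Set.finite_Iio M).image _)
  have hmem2 : ∀ x ∈ A, ∀ y ∈ B, hurwitz x y ∈ C := by
    intro x hx
    induction hx using Submodule.span_induction with
    | mem u hu =>
      intro y hy
      induction hy using Submodule.span_induction with
      | mem v hv => exact Submodule.subset_span (Set.mem_image2_of_mem hu hv)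
      | zero => rw [hurwitz_zero_right]; exact C.zero_mem
      | add v w _ _ hv hw => rw [hurwitz_add_right]; exact C.add_mem hv hw
      | smul r v _ hv => rw [hurwitz_smul_right]; exact C.smul_mem r hv
    | zero => intro y _; rw [hurwitz_zero_left]; exact C.zero_mem
    | add u w _ _ hu hw => intro y hy; rw [hurwitz_add_left]; exact C.add_mem (hu y hy) (hw y hy)
    | smul r u _ hu => intro y hy; rw [hurwitz_smul_left]; exact C.smul_mem r (hu y hy)
  have haA : a ∈ A := by
    have := hgenA 0 hN
    rwa [pow_zero, Module.End.one_apply] at this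
  have hbB : b ∈ B := by
    have := hgenB 0 hM
    rwa [pow_zero, Module.End.one_apply] at this
  have hab : hurwitz a b ∈ C := hmem2 a haA b hbB
  have hCstab : ∀ z ∈ C, shiftL z ∈ C := by
    intro z hz
    have hle : C ≤ Submodule.comap shiftL C := by
      rw [hC, Submodule.span_le]
      rintro _ ⟨u, hu, v, hv, rfl⟩
      have huA : u ∈ A := Submodule.subset_span hu
      have hvB : v ∈ B := Submodule.subset_span hv
      have : shiftL (hurwitz u v) ∈ C := by
        rw [shiftL_hurwitz]
        exact C.add_mem (hmem2 _ (hAstab u huA) _ hvB) (hmem2 _ huA _ (hBstab v hvB))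
      exact this
    exact hle hz
  haveI : Module.Finite R C := Module.Finite.span_of_finite R hfin
  obtain ⟨p, hpmonic, hp0⟩ :=
    LinearMap.exists_monic_and_aeval_eq_zero R (shiftL.restrict hCstab)
  set q : Polynomial R := p * Polynomial.X with hq
  have hqmonic : q.Monic := hpmonic.mul Polynomial.monic_X
  have hq0 : Polynomial.aeval (shiftL.restrict hCstab) q = 0 := by
    rw [hq, map_mul, hp0, zero_mul]
  have hD : 1 ≤ q.natDegree := by
    rw [hq, Polynomial.natDegree_mul_X hpmonic.ne_zero]
    omega
  have hzero : (Polynomial.aeval (shiftL : Module.End R (ℕ → R)) q) (hurwitz a b) = 0 := by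
    have h1 : (Polynomial.aeval (shiftL.restrict hCstab) q) ⟨hurwitz a b, hab⟩ = 0 := by
      rw [hq0]; rfl
    have h2 := congrArg Subtype.val h1
    rwa [aeval_restrict_coe] at h2
  set D := q.natDegree with hDdef
  have hexp := Polynomial.aeval_eq_sum_range (p := q) (shiftL : Module.End R (ℕ → R))
  rw [hexp] at hzero
  rw [Finset.sum_range_succ, LinearMap.add_apply, LinearMap.smul_apply,
    hqmonic.coeff_natDegree, one_smul, LinearMap.sum_apply] at hzero
  have hfinal : (shiftL ^ D) (hurwitz a b)
      = ∑ i ∈ Finset.range D, (-(q.coeff i)) • (shiftL ^ i) (hurwitz a b) := by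
    have h3 := eq_neg_of_add_eq_zero_right hzero
    rw [h3, ← Finset.sum_neg_distrib]
    refine Finset.sum_congr rfl fun i _ => ?_
    rw [LinearMap.smul_apply, ← neg_smul]
  exact isLinRec_of_shift _ D hD _ hfinal
end

section
/- The map ψ(a) := a ⋆ e, where e = ((-1)^n), is an R-algebra isomorphism from (W(R), +, ⊙) (linear recurrent sequences with Hadamard product) onto (W(R), +, ⊠) (linear recurrent sequences with Newton product); i.e., ψ is additive, bijective on linear recurrent sequences, R-linear, and satisfies ψ(a ⊙ b) = ψ(a) ⊠ ψ(b). -/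
open Finset

def hadamard {R : Type*} [CommRing R] (a b : ℕ → R) : ℕ → R :=
  fun n => a n * b n

def newton {R : Type*} [CommRing R] (a b : ℕ → R) : ℕ → R :=
  fun n => ∑ i ∈ Finset.range (n + 1), ∑ j ∈ Finset.range (i + 1),
    (n.choose i : R) * (i.choose j : R) * a i * b (n - j)

namespace HN

open Polynomial

variable {R : Type*} [CommRing R]

def Eop : (ℕ → R) →ₗ[R] (ℕ → R) where
  toFun a := fun n => a (n + 1)
  map_add' _ _ := rfl
  map_smul' _ _ := rfl

lemma Eop_apply (a : ℕ → R) (n : ℕ) : Eop a n = a (n + 1) := rfl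

lemma Eop_pow_apply (k : ℕ) (a : ℕ → R) (n : ℕ) : (Eop ^ k) a n = a (n + k) := by
  induction k generalizing a n with
  | zero => rfl
  | succ k ih =>
      rw [pow_succ, Module.End.mul_apply, ih, Eop_apply]
      rfl

def Theta (c : R) : (ℕ → R) →ₗ[R] (ℕ → R) where
  toFun a := fun n => ∑ i ∈ range (n + 1), (n.choose i : R) * a i * c ^ (n - i)
  map_add' a b := by
    funext n
    simp [mul_add, add_mul, Finset.sum_add_distrib]
  map_smul' r a := by
    funext n
    simp only [Pi.smul_apply, smul_eq_mul, RingHom.id_apply, Finset.mul_sum]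
    exact Finset.sum_congr rfl fun i _ => by ring

lemma Theta_apply (c : R) (a : ℕ → R) (n : ℕ) :
    Theta c a n = ∑ i ∈ range (n + 1), (n.choose i : R) * a i * c ^ (n - i) := rfl

lemma theta_zero (c : R) (a : ℕ → R) : Theta c a 0 = a 0 := by
  simp [Theta_apply]

lemma theta_succ (c : R) (a : ℕ → R) (n : ℕ) :
    Theta c a (n + 1) = Theta c (Eop a) n + c * Theta c a n := by
  have hmid : (∑ j ∈ range (n + 2), (n.choose j : R) * a j * c ^ (n + 1 - j))
      = c * Theta c a n := by
    rw [Finset.sum_range_succ]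
    simp only [Nat.choose_succ_self, Nat.cast_zero, zero_mul, mul_zero, add_zero]
    rw [Theta_apply, Finset.mul_sum]
    refine Finset.sum_congr rfl fun j hj => ?_
    simp only [Finset.mem_range] at hj
    have : n + 1 - j = (n - j) + 1 := by omega
    rw [this, pow_succ]; ring
  have hmid2 : (∑ j ∈ range (n + 2), (n.choose j : R) * a j * c ^ (n + 1 - j)) =
      (∑ i ∈ range (n + 1), (n.choose (i + 1) : R) * a (i + 1) * c ^ (n - i))
        + ((n + 1).choose 0 : R) * a 0 * c ^ (n + 1 - 0) := by
    rw [Finset.sum_range_succ']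
    congr 1
    · refine Finset.sum_congr rfl fun i hi => ?_
      have : n + 1 - (i + 1) = n - i := by omega
      rw [this]
    · simp
  rw [Theta_apply, Finset.sum_range_succ' _ (n + 1)]
  have h1 : ∀ i ∈ range (n + 1),
      (((n + 1).choose (i + 1) : R)) * a (i + 1) * c ^ (n + 1 - (i + 1)) =
      (n.choose i : R) * a (i + 1) * c ^ (n - i)
        + (n.choose (i + 1) : R) * a (i + 1) * c ^ (n - i) := by
    intro i hi
    have : n + 1 - (i + 1) = n - i := by omega
    rw [this, Nat.choose_succ_succ]
    push_cast
    ring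
  rw [Finset.sum_congr rfl h1, Finset.sum_add_distrib]
  have h2 : (∑ i ∈ range (n + 1), (n.choose i : R) * a (i + 1) * c ^ (n - i)) =
      Theta c (Eop a) n := rfl
  rw [add_assoc, h2, ← hmid2, hmid]

lemma isLinRec_of_poly (a : ℕ → R) (p : R[X]) (hp : p.Monic)
    (h0 : aeval (Eop (R := R)) p a = 0) : IsLinRec a := by
  set N := p.natDegree with hN
  have hev : ∀ m, ∑ k ∈ range (N + 1), p.coeff k * a (m + k) = 0 := by
    intro m
    have h1 : (aeval (Eop (R := R)) p) a
        = (∑ i ∈ range (N + 1), p.coeff i • (Eop : Module.End R (ℕ → R)) ^ i) a :=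
      congrArg (fun T : Module.End R (ℕ → R) => T a) (aeval_eq_sum_range _)
    rw [h0] at h1
    have h2 := congrFun h1.symm m
    simp only [LinearMap.sum_apply, Finset.sum_apply, LinearMap.smul_apply, Pi.smul_apply,
      smul_eq_mul, Pi.zero_apply] at h2
    rw [← h2]
    exact Finset.sum_congr rfl fun k _ => by rw [Eop_pow_apply]
  rcases Nat.eq_zero_or_pos N with h | h
  · have hp1 : p = 1 := hp.natDegree_eq_zero.mp h
    have ha : ∀ n, a n = 0 := by
      intro n
      have h3 := hev n
      rw [h] at h3
      simpa [hp1] using h3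
    exact ⟨1, le_refl 1, fun _ => 0, fun n _ => by simp [ha]⟩
  · refine ⟨N, h, fun i => -(p.coeff (N - 1 - i)), fun n hn => ?_⟩
    have key := hev (n - N)
    rw [Finset.sum_range_succ, hp.coeff_natDegree, one_mul] at key
    have hnN : n - N + N = n := by omega
    rw [hnN] at key
    rw [← Finset.sum_range_reflect]
    have hc : ∀ j ∈ range N,
        -(p.coeff (N - 1 - (N - 1 - j))) * a (n - 1 - (N - 1 - j))
          = -(p.coeff j * a (n - N + j)) := by
      intro j hj
      simp only [Finset.mem_range] at hj
      have e1 : N - 1 - (N - 1 - j) = j := by omega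
      have e2 : n - 1 - (N - 1 - j) = n - N + j := by omega
      rw [e1, e2]; ring
    rw [Finset.sum_congr rfl hc, Finset.sum_neg_distrib]
    linear_combination key

lemma poly_of_isLinRec {a : ℕ → R} (N : ℕ) (hN : 1 ≤ N) (h : ℕ → R)
    (key : ∀ n, N ≤ n → a n = ∑ i ∈ Finset.range N, h i * a (n - 1 - i)) :
    ∃ p : R[X], p.Monic ∧ aeval (Eop (R := R)) p a = 0 := by
  refine ⟨X ^ N - ∑ i ∈ range N, C (h i) * X ^ (N - 1 - i), ?_, ?_⟩
  · apply monic_X_pow_sub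
    apply lt_of_le_of_lt (degree_sum_le _ _)
    have hbot : (⊥ : WithBot ℕ) < (N : WithBot ℕ) := by
      simp [bot_lt_iff_ne_bot]
    rw [Finset.sup_lt_iff hbot]
    intro i _
    refine lt_of_le_of_lt (degree_C_mul_X_pow_le _ _) ?_
    exact_mod_cast Nat.lt_of_le_of_lt (Nat.sub_le _ _) (by omega)
  · have hx : aeval (Eop (R := R)) (X ^ N - ∑ i ∈ range N, C (h i) * X ^ (N - 1 - i))
        = (Eop : Module.End R (ℕ → R)) ^ N
          - ∑ i ∈ range N, h i • (Eop : Module.End R (ℕ → R)) ^ (N - 1 - i) := by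
      rw [map_sub, map_pow, aeval_X, map_sum]
      congr 1
      refine Finset.sum_congr rfl fun i _ => ?_
      rw [map_mul, aeval_C, map_pow, aeval_X, ← Algebra.smul_def]
    funext n
    rw [hx]
    simp only [LinearMap.sub_apply, LinearMap.sum_apply, LinearMap.smul_apply, Finset.sum_apply,
      Pi.sub_apply, Pi.smul_apply, smul_eq_mul, Pi.zero_apply, Eop_pow_apply]
    rw [sub_eq_zero]
    rw [key (n + N) (by omega)]
    refine Finset.sum_congr rfl fun i hi => ?_
    simp only [Finset.mem_range] at hi
    congr 2
    omega

-- intertwining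
lemma Eop_mul_theta (c : R) :
    (Eop * Theta c : Module.End R (ℕ → R))
      = Theta c * (Eop + algebraMap R (Module.End R (ℕ → R)) c) := by
  refine LinearMap.ext fun a => funext fun n => ?_
  have h1 : (Eop * Theta c : Module.End R (ℕ → R)) a n = Theta c a (n + 1) := rfl
  rw [h1, theta_succ]
  have h2 : ((Eop + algebraMap R (Module.End R (ℕ → R)) c : Module.End R (ℕ → R))) a
      = Eop a + c • a := by
    simp [LinearMap.add_apply, Module.algebraMap_end_apply]
  show _ = Theta c (((Eop + algebraMap R (Module.End R (ℕ → R)) c : Module.End R (ℕ → R))) a) n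
  rw [h2, map_add, map_smul]
  simp [Pi.add_apply, Pi.smul_apply, smul_eq_mul]

lemma pow_mul_theta (c : R) (k : ℕ) :
    ((Eop : Module.End R (ℕ → R)) ^ k * Theta c)
      = Theta c * (Eop + algebraMap R (Module.End R (ℕ → R)) c) ^ k := by
  induction k with
  | zero => simp
  | succ k ih =>
      rw [pow_succ, pow_succ, mul_assoc, Eop_mul_theta, ← mul_assoc, ih, mul_assoc]

lemma aeval_mul_theta (c : R) (p : R[X]) :
    (aeval (Eop (R := R)) p * Theta c : Module.End R (ℕ → R))
      = Theta c * aeval (Eop + algebraMap R (Module.End R (ℕ → R)) c) p := by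
  rw [aeval_eq_sum_range, aeval_eq_sum_range, Finset.sum_mul, Finset.mul_sum]
  refine Finset.sum_congr rfl fun k _ => ?_
  rw [smul_mul_assoc, mul_smul_comm, pow_mul_theta]

lemma theta_preserves (c : R) {a : ℕ → R} (ha : IsLinRec a) : IsLinRec (Theta c a) := by
  obtain ⟨N, hN, h, key⟩ := ha
  obtain ⟨p, hp, h0⟩ := poly_of_isLinRec N hN h key
  refine isLinRec_of_poly _ (p.comp (X - C c)) (hp.comp_X_sub_C c) ?_
  have h1 : aeval (Eop + algebraMap R (Module.End R (ℕ → R)) c) (p.comp (X - C c))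
      = aeval (Eop (R := R)) p := by
    rw [aeval_comp, map_sub, aeval_X, aeval_C, add_sub_cancel_right]
  have h2 := congrArg (fun T : Module.End R (ℕ → R) => T a) (aeval_mul_theta c (p.comp (X - C c)))
  simp only [Module.End.mul_apply, h1, h0, map_zero] at h2
  exact h2

lemma theta_theta {c d : R} (hcd : c + d = 0) (a : ℕ → R) (n : ℕ) :
    Theta c (Theta d a) n = a n := by
  induction n generalizing a with
  | zero => rw [theta_zero, theta_zero]
  | succ n ih =>
      rw [theta_succ]
      have hE : Eop (Theta d a) = Theta d (Eop a) + d • Theta d a :=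
        funext fun m => theta_succ d a m
      rw [hE, map_add, map_smul]
      simp only [Pi.add_apply, Pi.smul_apply, smul_eq_mul]
      rw [ih (Eop a), ih a, Eop_apply]
      linear_combination (a n) * hcd

lemma pascal_row (i : ℕ) (w : ℕ → R) :
    ∑ j ∈ range (i + 2), ((i + 1).choose j : R) * w j
      = ∑ j ∈ range (i + 1), (i.choose j : R) * (w j + w (j + 1)) := by
  rw [Finset.sum_range_succ' _ (i + 1)]
  have h : ∀ j ∈ range (i + 1), ((i + 1).choose (j + 1) : R) * w (j + 1)
      = (i.choose j : R) * w (j + 1) + (i.choose (j + 1) : R) * w (j + 1) := by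
    intro j _
    rw [Nat.choose_succ_succ]
    push_cast
    ring
  rw [Finset.sum_congr rfl h, Finset.sum_add_distrib]
  have h2 : (∑ j ∈ range (i + 1), (i.choose (j + 1) : R) * w (j + 1))
      + ((i + 1).choose 0 : R) * w 0 = ∑ j ∈ range (i + 1), (i.choose j : R) * w j := by
    have h3 := Finset.sum_range_succ' (fun j => (i.choose j : R) * w j) (i + 1)
    rw [Finset.sum_range_succ] at h3
    simp only [Nat.choose_succ_self, Nat.cast_zero, zero_mul, add_zero, Nat.choose_zero_right,
      Nat.cast_one, one_mul] at h3
    simp only [Nat.choose_zero_right, Nat.cast_one, one_mul]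
    exact h3.symm
  rw [add_assoc, h2, ← Finset.sum_add_distrib]
  refine Finset.sum_congr rfl fun j _ => by ring

lemma newton_succ (u v : ℕ → R) (n : ℕ) :
    newton u v (n + 1)
      = newton (Eop u) (Eop v) n + newton (Eop u) v n + newton u (Eop v) n := by
  have lhs_eq : newton u v (n + 1)
      = ∑ i ∈ range (n + 2), ((n + 1).choose i : R)
          * (∑ j ∈ range (i + 1), (i.choose j : R) * u i * v (n + 1 - j)) := by
    simp only [newton]
    refine Finset.sum_congr rfl fun i _ => ?_
    rw [Finset.mul_sum]
    exact Finset.sum_congr rfl fun j _ => by ring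
  rw [lhs_eq, pascal_row n (fun i => ∑ j ∈ range (i + 1), (i.choose j : R) * u i * v (n + 1 - j))]
  have split : ∀ i ∈ range (n + 1),
      (n.choose i : R) * ((∑ j ∈ range (i + 1), (i.choose j : R) * u i * v (n + 1 - j))
        + (∑ j ∈ range (i + 2), ((i + 1).choose j : R) * u (i + 1) * v (n + 1 - j)))
      = (n.choose i : R) * (∑ j ∈ range (i + 1), (i.choose j : R) * u i * v (n + 1 - j))
        + (n.choose i : R) * (∑ j ∈ range (i + 2), ((i + 1).choose j : R) * u (i + 1) * v (n + 1 - j)) := by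
    intro i _
    ring
  rw [Finset.sum_congr rfl split, Finset.sum_add_distrib]
  have part1 : (∑ i ∈ range (n + 1), (n.choose i : R)
      * (∑ j ∈ range (i + 1), (i.choose j : R) * u i * v (n + 1 - j)))
      = newton u (Eop v) n := by
    simp only [newton, Eop_apply]
    refine Finset.sum_congr rfl fun i hi => ?_
    rw [Finset.mul_sum]
    refine Finset.sum_congr rfl fun j hj => ?_
    simp only [Finset.mem_range] at hi hj
    have : n + 1 - j = (n - j) + 1 := by omega
    rw [this]
    ring
  have part2 : (∑ i ∈ range (n + 1), (n.choose i : R)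
      * (∑ j ∈ range (i + 2), ((i + 1).choose j : R) * u (i + 1) * v (n + 1 - j)))
      = newton (Eop u) (Eop v) n + newton (Eop u) v n := by
    have inner : ∀ i ∈ range (n + 1),
        (∑ j ∈ range (i + 2), ((i + 1).choose j : R) * u (i + 1) * v (n + 1 - j))
        = ∑ j ∈ range (i + 1), (i.choose j : R)
            * (u (i + 1) * v (n + 1 - j) + u (i + 1) * v (n - j)) := by
      intro i _
      have := pascal_row (R := R) i (fun j => u (i + 1) * v (n + 1 - j))
      rw [show (∑ j ∈ range (i + 2), ((i + 1).choose j : R) * u (i + 1) * v (n + 1 - j))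
          = ∑ j ∈ range (i + 2), ((i + 1).choose j : R) * (u (i + 1) * v (n + 1 - j)) from
        Finset.sum_congr rfl fun j _ => by ring, this]
      refine Finset.sum_congr rfl fun j _ => ?_
      have hd : n + 1 - (j + 1) = n - j := by omega
      rw [hd]
    have step : (∑ i ∈ range (n + 1), (n.choose i : R)
        * (∑ j ∈ range (i + 2), ((i + 1).choose j : R) * u (i + 1) * v (n + 1 - j)))
        = ∑ i ∈ range (n + 1), (n.choose i : R)
            * (∑ j ∈ range (i + 1), (i.choose j : R)
                * (u (i + 1) * v (n + 1 - j) + u (i + 1) * v (n - j))) :=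
      Finset.sum_congr rfl fun i hi => by rw [inner i hi]
    rw [step]
    simp only [newton, Eop_apply]
    rw [← Finset.sum_add_distrib]
    refine Finset.sum_congr rfl fun i hi => ?_
    rw [Finset.mul_sum, ← Finset.sum_add_distrib]
    refine Finset.sum_congr rfl fun j hj => ?_
    simp only [Finset.mem_range] at hi hj
    have : n + 1 - j = (n - j) + 1 := by omega
    rw [this]
    ring
  rw [part1, part2]
  ring

lemma newton_sub_left (u u' v : ℕ → R) (n : ℕ) :
    newton (u - u') v n = newton u v n - newton u' v n := by
  simp only [newton, Pi.sub_apply, ← Finset.sum_sub_distrib]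
  refine Finset.sum_congr rfl fun i _ => ?_
  refine Finset.sum_congr rfl fun j _ => by ring

lemma newton_sub_right (u v v' : ℕ → R) (n : ℕ) :
    newton u (v - v') n = newton u v n - newton u v' n := by
  simp only [newton, Pi.sub_apply, ← Finset.sum_sub_distrib]
  refine Finset.sum_congr rfl fun i _ => ?_
  refine Finset.sum_congr rfl fun j _ => by ring

lemma psi_mul (n : ℕ) : ∀ a b : ℕ → R,
    Theta (-1 : R) (hadamard a b) n = newton (Theta (-1) a) (Theta (-1) b) n := by
  induction n with
  | zero =>
      intro a b
      rw [theta_zero]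
      simp [newton, hadamard, theta_zero]
  | succ n ih =>
      intro a b
      have hE : ∀ x : ℕ → R, Eop (Theta (-1 : R) x) = Theta (-1) (Eop x) - Theta (-1) x := by
        intro x
        funext m
        rw [Eop_apply, theta_succ]
        simp only [Pi.sub_apply]
        ring
      have hhad : Eop (hadamard a b) = hadamard (Eop a) (Eop b) := rfl
      rw [theta_succ, hhad, ih (Eop a) (Eop b), ih a b, newton_succ, hE a, hE b]
      simp only [newton_sub_left, newton_sub_right]
      ring

end HN

/-- `ψ(a) = a ⋆ e` is an `R`-algebra isomorphism from `(W(R), +, ⊙)` onto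
`(W(R), +, ⊠)`. -/
theorem hadamard_newton_isomorphic {R : Type*} [CommRing R] :
    ∃ ψ : (ℕ → R) → (ℕ → R),
      (∀ a, ψ a = hurwitz a (fun n => (-1 : R) ^ n)) ∧
      (∀ a b, ψ (a + b) = ψ a + ψ b) ∧
      (∀ (r : R) (a : ℕ → R), ψ (r • a) = r • ψ a) ∧
      Set.BijOn ψ {a : ℕ → R | IsLinRec a} {a : ℕ → R | IsLinRec a} ∧
      (∀ a b, ψ (hadamard a b) = newton (ψ a) (ψ b)) := by
  refine ⟨fun a => HN.Theta (-1 : R) a, fun a => rfl, fun a b => map_add _ _ _,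
    fun r a => map_smul _ _ _, ⟨fun a ha => HN.theta_preserves _ ha, ?_, ?_⟩, ?_⟩
  · intro a _ b _ hab
    have hab' : HN.Theta (-1 : R) a = HN.Theta (-1 : R) b := hab
    funext n
    calc a n = HN.Theta (1 : R) (HN.Theta (-1 : R) a) n :=
          (HN.theta_theta (by ring) a n).symm
      _ = HN.Theta (1 : R) (HN.Theta (-1 : R) b) n := by rw [hab']
      _ = b n := HN.theta_theta (by ring) b n
  · intro b hb
    exact ⟨HN.Theta (1 : R) b, HN.theta_preserves 1 hb,
      funext fun n => HN.theta_theta (by ring) b n⟩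
  · intro a b
    exact funext fun n => HN.psi_mul n a b
end

section
/- For any sequences a, b : ℕ → R: (a ⊠ b) ⋆ 1 = (a ⋆ 1) ⊙ (b ⋆ 1), i.e. the binomial transform takes the Newton product to the Hadamard product. -/
open Finset

/-!
Write `T f n = ∑ k ≤ n, C(n,k) f k` for the binomial transform. Reflecting `j ↦ i - j`, the inner
sum of the Newton product is `T (b (m - i + ·)) i`. Exchanging the sums over `m` and `i` and using
`C(n,m) C(m,i) = C(n,i) C(n-i,m-i)`, the coefficient of `C(n,i) a i` in the transform of the Newton
product becomes the iterated transform of `(p, q) ↦ b (p + q)` at `(n - i, i)`. That equals `T b n`,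
a Vandermonde-type identity which follows by induction from Pascal's rule
`T f (n + 1) = T f n + T (f (· + 1)) n`.
-/

section BinomialTransform

variable {M : Type*} [AddCommMonoid M]

def binomialTransform (f : ℕ → M) (n : ℕ) : M :=
  ∑ k ∈ range (n + 1), n.choose k • f k

theorem binomialTransform_zero (f : ℕ → M) : binomialTransform f 0 = f 0 := by
  simp [binomialTransform]

theorem binomialTransform_succ (f : ℕ → M) (n : ℕ) :
    binomialTransform f (n + 1) =
      binomialTransform f n + binomialTransform (fun k => f (k + 1)) n :=
  sum_choose_succ_nsmul (fun k _ => f k) n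

theorem binomialTransform_binomialTransform_add (f : ℕ → M) (N K : ℕ) :
    binomialTransform (fun p => binomialTransform (fun q => f (p + q)) N) K =
      binomialTransform f (K + N) := by
  induction K generalizing f with
  | zero => simp [binomialTransform_zero]
  | succ K ih =>
    rw [binomialTransform_succ, ih, add_right_comm, binomialTransform_succ]
    simpa only [add_right_comm _ 1] using
      congrArg (binomialTransform f (K + N) + ·) (ih fun k => f (k + 1))

theorem sum_range_choose_smul_sub (g : ℕ → M) {i m : ℕ} (him : i ≤ m) :
    ∑ j ∈ range (i + 1), i.choose j • g (m - j) =
      binomialTransform (fun q => g (m - i + q)) i := by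
  rw [binomialTransform, ← sum_range_reflect]
  refine sum_congr rfl fun j hj => ?_
  have hji : j ≤ i := Nat.lt_succ_iff.mp (mem_range.mp hj)
  rw [Nat.add_sub_cancel, Nat.choose_symm hji]
  congr 2
  omega

theorem sum_Ico_choose_mul_choose_smul (g : ℕ → M) {i n : ℕ} (hin : i ≤ n) :
    ∑ m ∈ Ico i (n + 1), (n.choose m * m.choose i) • g (m - i) =
      n.choose i • binomialTransform g (n - i) := by
  rw [sum_Ico_eq_sum_range, binomialTransform, smul_sum, Nat.sub_add_comm hin]
  refine sum_congr rfl fun k _ => ?_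
  rw [Nat.choose_mul (Nat.le_add_right i k), mul_smul, Nat.add_sub_cancel_left]

theorem sum_Ico_choose_mul_choose_smul_binomialTransform (b : ℕ → M) {i n : ℕ} (hin : i ≤ n) :
    ∑ m ∈ Ico i (n + 1),
        (n.choose m * m.choose i) • binomialTransform (fun q => b (m - i + q)) i =
      n.choose i • binomialTransform b n := by
  rw [sum_Ico_choose_mul_choose_smul (fun p => binomialTransform (fun q => b (p + q)) i) hin,
    binomialTransform_binomialTransform_add, Nat.sub_add_cancel hin]

end BinomialTransform

section CommRing

variable {R : Type*} [CommRing R]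

theorem hurwitz_one (a : ℕ → R) : hurwitz a (fun _ => 1) = binomialTransform a := by
  ext n
  simp [hurwitz, binomialTransform, nsmul_eq_mul]

theorem newton_apply (a b : ℕ → R) (m : ℕ) :
    newton a b m = ∑ i ∈ range (m + 1),
      (m.choose i : R) * a i * binomialTransform (fun q => b (m - i + q)) i := by
  refine sum_congr rfl fun i hi => ?_
  rw [← sum_range_choose_smul_sub b (Nat.lt_succ_iff.mp (mem_range.mp hi)), mul_sum]
  refine sum_congr rfl fun j _ => ?_
  rw [nsmul_eq_mul]
  ring

end CommRing

/-- The binomial transform takes the Newton product to the Hadamard product. -/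
theorem binomial_transform_newton {R : Type*} [CommRing R] (a b : ℕ → R) :
    hurwitz (newton a b) (fun _ => (1 : R)) =
      hadamard (hurwitz a (fun _ => (1 : R))) (hurwitz b (fun _ => (1 : R))) := by
  ext n
  simp only [hurwitz_one, hadamard]
  rw [binomialTransform, binomialTransform, sum_mul]
  simp only [newton_apply, smul_sum, range_eq_Ico]
  rw [← sum_Ico_Ico_comm]
  refine sum_congr rfl fun i hi => ?_
  have hin : i ≤ n := Nat.lt_succ_iff.mp (mem_Ico.mp hi).2
  calc ∑ m ∈ Ico i (n + 1), n.choose m •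
        ((m.choose i : R) * a i * binomialTransform (fun q => b (m - i + q)) i)
      = a i * ∑ m ∈ Ico i (n + 1),
          (n.choose m * m.choose i) • binomialTransform (fun q => b (m - i + q)) i := by
        rw [mul_sum]
        refine sum_congr rfl fun m _ => ?_
        simp only [nsmul_eq_mul]
        push_cast
        ring
    _ = n.choose i • a i * binomialTransform b n := by
        rw [sum_Ico_choose_mul_choose_smul_binomialTransform b hin, nsmul_eq_mul, nsmul_eq_mul]
        ring
end

section
/- There is no injective R-algebra morphism from (W(R), +, ⊙) with the Hadamard product to (W(R), +, ⋆) with the Hurwitz product; in particular these two R-algebras are not isomorphic. -/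
open Finset

/-- The indicator sequence of `{k}`. -/
def deltaSeq (R : Type*) [CommRing R] (k : ℕ) : ℕ → R :=
  fun n => if n = k then 1 else 0

lemma deltaSeq_isLinRec (R : Type*) [CommRing R] (k : ℕ) :
    IsLinRec (deltaSeq R k) := by
  refine ⟨k + 1, by omega, fun _ => 0, fun n hn => ?_⟩
  have hnk : n ≠ k := by omega
  simp [deltaSeq, hnk]

lemma zero_isLinRec (R : Type*) [CommRing R] : IsLinRec (0 : ℕ → R) :=
  ⟨1, le_rfl, fun _ => 0, fun n _ => by simp⟩

lemma smul_isLinRec {R : Type*} [CommRing R] (r : R) {a : ℕ → R}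
    (ha : IsLinRec a) : IsLinRec (r • a) := by
  obtain ⟨N, hN, h, hrec⟩ := ha
  refine ⟨N, hN, h, fun n hn => ?_⟩
  simp only [Pi.smul_apply, smul_eq_mul, hrec n hn, Finset.mul_sum]
  exact Finset.sum_congr rfl fun i _ => by ring

lemma hadamard_delta_self (R : Type*) [CommRing R] (k : ℕ) :
    hadamard (deltaSeq R k) (deltaSeq R k) = deltaSeq R k := by
  funext n
  simp only [hadamard, deltaSeq]
  split <;> simp

lemma hadamard_delta_ne (R : Type*) [CommRing R] {k j : ℕ} (h : k ≠ j) :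
    hadamard (deltaSeq R k) (deltaSeq R j) = 0 := by
  funext n
  simp only [hadamard, deltaSeq, Pi.zero_apply]
  rcases eq_or_ne n k with rfl | hk
  · simp [h]
  · simp [hk]

/-- An idempotent of the Hurwitz ring is supported at `0`. -/
lemma hurwitz_idem_support {R : Type*} [CommRing R] {x : ℕ → R}
    (hx : hurwitz x x = x) : ∀ n, 1 ≤ n → x n = 0 := by
  have h0 : x 0 * x 0 = x 0 := by
    have := congrFun hx 0
    simpa [hurwitz] using this
  intro n hn
  induction n using Nat.strong_induction_on with
  | _ n ih =>
    have hmid : ∀ i, 1 ≤ i → i < n → x i = 0 := fun i h1 h2 => ih i h2 h1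
    have hxn := (congrFun hx n).symm
    simp only [hurwitz] at hxn
    have hsum : (∑ i ∈ Finset.range (n + 1), (n.choose i : R) * x i * x (n - i))
        = x 0 * x n + x n * x 0 := by
      rw [Finset.sum_range_succ]
      have hfirst : (∑ i ∈ Finset.range n, (n.choose i : R) * x i * x (n - i))
          = x 0 * x n := by
        rw [Finset.sum_eq_single_of_mem 0 (Finset.mem_range.mpr (by omega))]
        · simp
        · intro i hi hi0
          have h1 : 1 ≤ i := Nat.one_le_iff_ne_zero.mpr hi0
          have h2 : i < n := Finset.mem_range.mp hi
          simp [hmid i h1 h2]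
      rw [hfirst]
      simp
    rw [hsum] at hxn
    -- hxn : x n = x 0 * x n + x n * x 0
    linear_combination (1 - 2 * x 0) * hxn - 4 * x n * h0

/-- There is no injective `R`-algebra morphism from `(W(R), +, ⊙)` to
`(W(R), +, ⋆)`; in particular these two `R`-algebras are not isomorphic. -/
theorem no_injective_hadamard_to_hurwitz {R : Type*} [CommRing R] [Nontrivial R] :
    ¬ ∃ ψ : (ℕ → R) → (ℕ → R),
      Set.MapsTo ψ {a : ℕ → R | IsLinRec a} {a : ℕ → R | IsLinRec a} ∧
      (∀ a b, IsLinRec a → IsLinRec b → ψ (a + b) = ψ a + ψ b) ∧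
      (∀ (r : R) (a : ℕ → R), IsLinRec a → ψ (r • a) = r • ψ a) ∧
      (∀ a b, IsLinRec a → IsLinRec b → ψ (hadamard a b) = hurwitz (ψ a) (ψ b)) ∧
      ψ (fun _ => (1 : R)) = (fun n => if n = 0 then (1 : R) else 0) ∧
      Set.InjOn ψ {a : ℕ → R | IsLinRec a} := by
  rintro ⟨ψ, -, -, hsmul, hmul, -, hinj⟩
  have hl0 : IsLinRec (deltaSeq R 0) := deltaSeq_isLinRec R 0
  have hl1 : IsLinRec (deltaSeq R 1) := deltaSeq_isLinRec R 1
  have hlz : IsLinRec (0 : ℕ → R) := zero_isLinRec R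
  -- ψ 0 = 0
  have hψ0 : ψ 0 = 0 := by
    have h := hsmul 0 0 hlz
    simpa using h
  set u := ψ (deltaSeq R 0) with hu
  set v := ψ (deltaSeq R 1) with hv
  -- u is a Hurwitz idempotent
  have huu : hurwitz u u = u := by
    have h := hmul _ _ hl0 hl0
    rw [hadamard_delta_self] at h
    exact h.symm
  have hsupp : ∀ n, 1 ≤ n → u n = 0 := hurwitz_idem_support huu
  -- hurwitz u v = 0
  have huv : hurwitz u v = 0 := by
    have h := hmul _ _ hl0 hl1
    rw [hadamard_delta_ne R (by omega)] at h
    rw [hψ0] at h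
    exact h.symm
  -- hurwitz u v = u 0 • v
  have hcalc : ∀ n, hurwitz u v n = u 0 * v n := by
    intro n
    rw [hurwitz.eq_def]
    rw [Finset.sum_eq_single_of_mem 0 (by simp)]
    · simp
    · intro i hi hi0
      have h1 : 1 ≤ i := Nat.one_le_iff_ne_zero.mpr hi0
      simp [hsupp i h1]
  have hsv : u 0 • v = 0 := by
    funext n
    have := hcalc n
    rw [huv] at this
    simpa using this.symm
  -- injectivity gives u 0 • deltaSeq R 1 = 0
  have hinj1 : u 0 • deltaSeq R 1 = 0 := by
    apply hinj (smul_isLinRec _ hl1) hlz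
    rw [hsmul _ _ hl1, ← hv, hsv, hψ0]
  have hu0 : u 0 = 0 := by
    have := congrFun hinj1 1
    simpa [deltaSeq] using this
  -- hence u = 0
  have huzero : u = 0 := by
    funext n
    rcases Nat.eq_zero_or_pos n with rfl | hn
    · exact hu0
    · exact hsupp n hn
  -- injectivity gives deltaSeq R 0 = 0, contradiction
  have : deltaSeq R 0 = 0 := by
    apply hinj hl0 hlz
    rw [← hu, huzero, hψ0]
  have h10 : (1 : R) = 0 := by
    have h := congrFun this 0
    simp only [deltaSeq, if_pos rfl, Pi.zero_apply] at h
    exact h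
  exact one_ne_zero h10
end
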